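/- Let n ≥ 6 be even and let F₄ = GaloisField 2 2 be the field with four elements, with conjugation a ↦ a². Let W = (Fin n → F₄) with the Hermitian form B(x,y) = Σ_i x_i y_i², let u = (1,…,1) ∈ W, let W' = {x ∈ W : B(x,u) = 0} (a subspace of W which contains u, since n is even), and let V = W' / span{u}, a vector space of dimension n − 2 over F₄. Then: (a) B induces a well-defined nondegenerate Hermitian form β on V satisfying β([x],[y]) = B(x,y) for all x, y ∈ W'; (b) the coordinate-permutation action of the symmetric group S_n on W preserves W' and span{u} and hence induces a group homomorphism ψ : S_n → GL(V); (c) ψ is injective, every ψ(σ) preserves β, for each i ≠ j the class [e_i + e_j] ∈ V is a nonzero singular vector (β([e_i+e_j],[e_i+e_j]) = 0), and for each transposition (i j) ∈ S_n the automorphism ψ((i j)) equals the unitary transvection of V in [e_i + e_j], i.e., ψ((i j))([w]) = [w + B(w, e_i + e_j) • (e_i + e_j)] for all w ∈ W'. (Hence S_n embeds into U_{n−2}(2) with all transpositions mapping to unitary transvections.) -/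

import Mathlib

/-!
Since `a⁴ = a` on `F₄`, the form `B` is Hermitian for the conjugation `a ↦ a²`. As
`B(x, u) = ∑ xᵢ` and `B(u, u) = n = 0`, the vector `u` is orthogonal to all of `W'`, so `B`
descends to `V`. There it is nondegenerate: `B(x, eᵢ + eⱼ) = xᵢ + xⱼ`, and `span{u}`
consists exactly of the constant vectors of `W'`. Permuting coordinates preserves `B`, `W'` and `u`.
If `σ b ≠ b`, pick `c ∉ {b, σ b}`; then `σ(e_b + e_c) - (e_b + e_c)` is `1` at `σ b` but `0`
at any `d ∉ {b, c, σ b, σ c}`, which exists for `n ≥ 5`, so it is not constant and `ψ` is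
injective. Finally, swapping coordinates `i` and `j` is, in characteristic 2, the map
`x ↦ x + (xᵢ + xⱼ)(eᵢ + eⱼ)`.
-/

/-- The field with four elements (conjugation is `a ↦ a²`). -/
abbrev F4 : Type := GaloisField 2 2

/-- The Hermitian form `B x y = ∑ i, x i * (y i)²` on `W = F₄ⁿ`. -/
noncomputable def B19 (n : ℕ) (x y : Fin n → F4) : F4 :=
  ∑ i : Fin n, x i * (y i) ^ 2

/-- The coordinate-sum linear functional on `F₄ⁿ`. -/
noncomputable def coordSum4 (n : ℕ) : (Fin n → F4) →ₗ[F4] F4 :=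
  ∑ i : Fin n, LinearMap.proj i

/-- The hyperplane `W' = {x : ∑ i, x i = 0}` of `F₄ⁿ`. -/
noncomputable def Wprime4 (n : ℕ) : Submodule F4 (Fin n → F4) :=
  LinearMap.ker (coordSum4 n)

/-- For even `n`, the all-ones vector `u = (1, …, 1)` lies in `W'`. -/
lemma uMem4 (n : ℕ) (hn : Even n) : (fun _ => 1 : Fin n → F4) ∈ Wprime4 n := by
  simp only [Wprime4, coordSum4, LinearMap.mem_ker, LinearMap.sum_apply, LinearMap.proj_apply,
    Finset.sum_const, Finset.card_univ, Fintype.card_fin, nsmul_eq_mul, mul_one]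
  exact (CharP.cast_eq_zero_iff F4 2 n).mpr hn.two_dvd

/-- The vector `e i + e j` lies in `W'`. -/
lemma eMem4 (n : ℕ) (i j : Fin n) :
    (Pi.single i 1 + Pi.single j 1 : Fin n → F4) ∈ Wprime4 n := by
  simp only [Wprime4, coordSum4, LinearMap.mem_ker, LinearMap.sum_apply, LinearMap.proj_apply,
    Pi.add_apply, Finset.sum_add_distrib]
  rw [Finset.sum_pi_single', Finset.sum_pi_single']
  simp only [Finset.mem_univ, if_true]
  exact CharTwo.add_self_eq_zero 1

/-- The all-ones vector as an element of `W'` (for even `n`). -/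
noncomputable def uElt4 (n : ℕ) (hn : Even n) : Wprime4 n := ⟨fun _ => 1, uMem4 n hn⟩

/-- The quotient space `V = W' / span{u}` (for even `n`). -/
abbrev V19 (n : ℕ) (hn : Even n) :=
  Wprime4 n ⧸ Submodule.span F4 {uElt4 n hn}

lemma LinearMap.map_ker_of_comp_eq {R M N : Type*} [Semiring R] [AddCommMonoid M]
    [AddCommMonoid N] [Module R M] [Module R N] (f : M →ₗ[R] N) (e : M ≃ₗ[R] M)
    (h : f ∘ₗ e = f) : (LinearMap.ker f).map (e : M →ₗ[R] M) = LinearMap.ker f := by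
  rw [Submodule.map_equiv_eq_comap_symm, ← LinearMap.ker_comp]
  congr 1
  ext x
  simpa using (LinearMap.congr_fun h (e.symm x)).symm

lemma Fin.exists_notMem_of_card_lt {n : ℕ} {s : Finset (Fin n)} (h : s.card < n) :
    ∃ d, d ∉ s := by
  obtain ⟨d, -, hd⟩ :=
    Finset.exists_mem_notMem_of_card_lt_card (s := s) (t := Finset.univ) (by simpa using h)
  exact ⟨d, hd⟩

namespace UnitaryQuotient

open Submodule

lemma pow_four_eq_self (a : F4) : a ^ 4 = a := by
  have := Fintype.ofFinite F4
  have hcard : Fintype.card F4 = 4 := by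
    rw [← Nat.card_eq_fintype_card, GaloisField.card 2 2 (by norm_num)]
    norm_num
  simpa [hcard] using FiniteField.pow_card a

section Form

variable {n : ℕ}

lemma B19_add_left (x x' y : Fin n → F4) : B19 n (x + x') y = B19 n x y + B19 n x' y := by
  simp only [B19, Pi.add_apply, add_mul, Finset.sum_add_distrib]

lemma B19_add_right (x y y' : Fin n → F4) : B19 n x (y + y') = B19 n x y + B19 n x y' := by
  simp only [B19, Pi.add_apply, CharTwo.add_sq, mul_add, Finset.sum_add_distrib]

lemma B19_smul_left (c : F4) (x y : Fin n → F4) : B19 n (c • x) y = c * B19 n x y := by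
  simp only [B19, Pi.smul_apply, smul_eq_mul, Finset.mul_sum, mul_assoc]

lemma B19_smul_right (c : F4) (x y : Fin n → F4) : B19 n x (c • y) = c ^ 2 * B19 n x y := by
  simp only [B19, Pi.smul_apply, smul_eq_mul, Finset.mul_sum]
  exact Finset.sum_congr rfl fun i _ => by ring

lemma B19_swap (x y : Fin n → F4) : B19 n y x = B19 n x y ^ 2 := by
  rw [B19, B19, CharTwo.sum_sq]
  refine Finset.sum_congr rfl fun i _ => ?_
  rw [mul_pow, ← pow_mul, pow_four_eq_self, mul_comm]

lemma B19_one_right (x : Fin n → F4) : B19 n x (fun _ => 1) = ∑ i, x i := by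
  simp [B19]

lemma B19_one_left (y : Fin n → F4) : B19 n (fun _ => 1) y = (∑ i, y i) ^ 2 := by
  simp [B19, CharTwo.sum_sq]

lemma B19_single_add_single_right (x : Fin n → F4) (i j : Fin n) :
    B19 n x (Pi.single i 1 + Pi.single j 1) = x i + x j := by
  have hsingle (k : Fin n) : B19 n x (Pi.single k 1) = x k := by
    simp [B19, Pi.single_apply]
  rw [B19_add_right, hsingle, hsingle]

lemma B19_perm (σ : Equiv.Perm (Fin n)) (x y : Fin n → F4) :
    B19 n (fun i => x (σ⁻¹ i)) (fun i => y (σ⁻¹ i)) = B19 n x y :=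
  Equiv.sum_comp σ⁻¹ fun i => x i * y i ^ 2

end Form

section Hyperplane

variable {n : ℕ}

lemma mem_Wprime4_iff {x : Fin n → F4} : x ∈ Wprime4 n ↔ ∑ i, x i = 0 := by
  simp [Wprime4, coordSum4]

lemma finrank_Wprime4 (hn : 0 < n) : Module.finrank F4 (Wprime4 n) = n - 1 := by
  have hsurj : Function.Surjective (coordSum4 n) := fun c =>
    ⟨Pi.single ⟨0, hn⟩ c, by simp [coordSum4, Finset.sum_pi_single']⟩
  have h := LinearMap.finrank_range_add_finrank_ker (coordSum4 n)
  rw [LinearMap.range_eq_top.2 hsurj, finrank_top, Module.finrank_self,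
    Module.finrank_fin_fun] at h
  rw [Wprime4]
  omega

lemma coordSum4_comp_perm (σ : Equiv.Perm (Fin n)) :
    coordSum4 n ∘ₗ (LinearEquiv.funCongrLeft F4 F4 σ.symm : (Fin n → F4) →ₗ[F4] _) =
      coordSum4 n := by
  refine LinearMap.ext fun x => ?_
  simpa [coordSum4] using Equiv.sum_comp σ.symm x

noncomputable def permW (σ : Equiv.Perm (Fin n)) : Wprime4 n ≃ₗ[F4] Wprime4 n :=
  LinearEquiv.ofSubmodules _ _ _
    (LinearMap.map_ker_of_comp_eq (coordSum4 n) _ (coordSum4_comp_perm σ))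

lemma permW_apply (σ : Equiv.Perm (Fin n)) (x : Wprime4 n) (i : Fin n) :
    (permW σ x).1 i = x.1 (σ⁻¹ i) := rfl

lemma B19_add_smul_one (hev : Even n) {x y : Fin n → F4} (hx : x ∈ Wprime4 n)
    (hy : y ∈ Wprime4 n) (c d : F4) :
    B19 n (x + c • fun _ => 1) (y + d • fun _ => 1) = B19 n x y := by
  have hx' := add_mem hx (smul_mem _ c (uMem4 n hev))
  rw [B19_add_right, B19_smul_right, B19_one_right, mem_Wprime4_iff.1 hx', B19_add_left,
    B19_smul_left, B19_one_left, mem_Wprime4_iff.1 hy]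
  ring

end Hyperplane

section Quotient

variable {n : ℕ} {hev : Even n}

lemma mem_span_uElt4_iff {x : Wprime4 n} :
    x ∈ span F4 {uElt4 n hev} ↔ ∀ i j, x.1 i = x.1 j := by
  rw [mem_span_singleton]
  refine ⟨fun ⟨c, hc⟩ i j => by simp [← hc, uElt4], fun h => ?_⟩
  rcases isEmpty_or_nonempty (Fin n) with _ | ⟨⟨i⟩⟩
  · exact ⟨0, Subtype.ext (funext isEmptyElim)⟩
  · exact ⟨x.1 i, Subtype.ext (funext fun j => by simp [uElt4, h i j])⟩

lemma uElt4_ne_zero (hn : 0 < n) : uElt4 n hev ≠ 0 := fun h =>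
  one_ne_zero (congr_fun (congrArg Subtype.val h) ⟨0, hn⟩)

lemma finrank_V19 (hn : 0 < n) : Module.finrank F4 (V19 n hev) = n - 2 := by
  have h : Module.finrank F4 (V19 n hev) + _ = _ :=
    finrank_quotient_add_finrank (span F4 {uElt4 n hev})
  rw [finrank_span_singleton (uElt4_ne_zero hn), finrank_Wprime4 hn] at h
  omega

lemma coe_eq_add_smul_one_of_sub_mem {x x' : Wprime4 n}
    (h : x - x' ∈ span F4 {uElt4 n hev}) : ∃ c : F4, x.1 = x'.1 + c • fun _ => 1 := by
  obtain ⟨c, hc⟩ := mem_span_singleton.1 h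
  exact ⟨c, by rw [← sub_eq_iff_eq_add', ← Submodule.coe_sub, ← hc]; rfl⟩

variable (n hev) in
noncomputable def beta (v w : V19 n hev) : F4 :=
  Quotient.liftOn₂ v w (fun x y => B19 n x.1 y.1) fun x y x' y' hx hy => by
    obtain ⟨c, hc⟩ := coe_eq_add_smul_one_of_sub_mem ((quotientRel_def _).1 hx)
    obtain ⟨d, hd⟩ := coe_eq_add_smul_one_of_sub_mem ((quotientRel_def _).1 hy)
    simp only [hc, hd, B19_add_smul_one hev x'.2 y'.2]

@[simp]
lemma beta_mk (x y : Wprime4 n) :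
    beta n hev (Submodule.Quotient.mk x) (Submodule.Quotient.mk y) = B19 n x.1 y.1 := rfl

lemma beta_add_left (v v' w : V19 n hev) :
    beta n hev (v + v') w = beta n hev v w + beta n hev v' w := by
  induction v using Submodule.Quotient.induction_on
  induction v' using Submodule.Quotient.induction_on
  induction w using Submodule.Quotient.induction_on
  exact B19_add_left _ _ _

lemma beta_add_right (v w w' : V19 n hev) :
    beta n hev v (w + w') = beta n hev v w + beta n hev v w' := by
  induction v using Submodule.Quotient.induction_on
  induction w using Submodule.Quotient.induction_on
  induction w' using Submodule.Quotient.induction_on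
  exact B19_add_right _ _ _

lemma beta_smul_left (c : F4) (v w : V19 n hev) : beta n hev (c • v) w = c * beta n hev v w := by
  induction v using Submodule.Quotient.induction_on
  induction w using Submodule.Quotient.induction_on
  exact B19_smul_left _ _ _

lemma beta_smul_right (c : F4) (v w : V19 n hev) :
    beta n hev v (c • w) = c ^ 2 * beta n hev v w := by
  induction v using Submodule.Quotient.induction_on
  induction w using Submodule.Quotient.induction_on
  exact B19_smul_right _ _ _

lemma beta_swap (v w : V19 n hev) : beta n hev w v = beta n hev v w ^ 2 := by
  induction v using Submodule.Quotient.induction_on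
  induction w using Submodule.Quotient.induction_on
  exact B19_swap _ _

lemma beta_nondegenerate (v : V19 n hev) (hv : ∀ w, beta n hev v w = 0) : v = 0 := by
  induction v using Submodule.Quotient.induction_on with | H x => ?_
  refine (Submodule.Quotient.mk_eq_zero _).2 (mem_span_uElt4_iff.2 fun i j => ?_)
  have h := hv (Submodule.Quotient.mk ⟨_, eMem4 n i j⟩)
  rwa [beta_mk, B19_single_add_single_right, CharTwo.add_eq_zero] at h

lemma map_span_uElt4_permW (σ : Equiv.Perm (Fin n)) :
    (span F4 {uElt4 n hev}).map (permW σ : Wprime4 n →ₗ[F4] Wprime4 n) =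
      span F4 {uElt4 n hev} := by
  rw [map_span, Set.image_singleton]
  rfl

variable (n hev) in
noncomputable def permHom : Equiv.Perm (Fin n) →* (V19 n hev ≃ₗ[F4] V19 n hev) where
  toFun σ := Submodule.Quotient.equiv _ _ (permW σ) (map_span_uElt4_permW σ)
  map_one' := LinearEquiv.toLinearMap_injective <|
    Submodule.linearMap_qext _ (LinearMap.ext fun _ => rfl)
  map_mul' _ _ := LinearEquiv.toLinearMap_injective <|
    Submodule.linearMap_qext _ (LinearMap.ext fun _ => rfl)

lemma permHom_mk (σ : Equiv.Perm (Fin n)) (x : Wprime4 n) :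
    permHom n hev σ (Submodule.Quotient.mk x) = Submodule.Quotient.mk (permW σ x) := rfl

lemma permHom_mk_of_apply_eq (σ : Equiv.Perm (Fin n)) {x x' : Wprime4 n}
    (h : ∀ i, x'.1 i = x.1 (σ⁻¹ i)) :
    permHom n hev σ (Submodule.Quotient.mk x) = Submodule.Quotient.mk x' :=
  congrArg Submodule.Quotient.mk (Subtype.ext (funext h)).symm

lemma beta_permHom (σ : Equiv.Perm (Fin n)) (v w : V19 n hev) :
    beta n hev (permHom n hev σ v) (permHom n hev σ w) = beta n hev v w := by
  induction v using Submodule.Quotient.induction_on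
  induction w using Submodule.Quotient.induction_on
  exact B19_perm σ _ _

lemma mk_single_add_single_ne_zero (hn : 3 ≤ n) {i j : Fin n} (hij : i ≠ j) :
    (Submodule.Quotient.mk ⟨_, eMem4 n i j⟩ : V19 n hev) ≠ 0 := by
  obtain ⟨d, hd⟩ :=
    Fin.exists_notMem_of_card_lt (s := {i, j}) (Finset.card_le_two.trans_lt (by omega))
  rw [Ne, Submodule.Quotient.mk_eq_zero, mem_span_uElt4_iff]
  intro h
  simp only [Finset.mem_insert, Finset.mem_singleton, not_or] at hd
  simpa [Pi.single_apply, hij, hd.1, hd.2] using h i d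

lemma beta_self_single_add_single {i j : Fin n} (hij : i ≠ j) :
    beta n hev (Submodule.Quotient.mk ⟨_, eMem4 n i j⟩)
      (Submodule.Quotient.mk ⟨_, eMem4 n i j⟩) = 0 := by
  rw [beta_mk, B19_single_add_single_right]
  simp [hij, hij.symm, CharTwo.add_self_eq_zero]

lemma permHom_swap_mk (i j : Fin n) {x x' : Wprime4 n}
    (h : x'.1 = x.1 + B19 n x.1 (Pi.single i 1 + Pi.single j 1) •
      (Pi.single i 1 + Pi.single j 1)) :
    permHom n hev (Equiv.swap i j) (Submodule.Quotient.mk x) = Submodule.Quotient.mk x' := by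
  refine permHom_mk_of_apply_eq _ fun t => ?_
  rw [h, B19_single_add_single_right, Equiv.swap_inv, Equiv.swap_apply_def]
  simp only [Pi.add_apply, Pi.smul_apply, Pi.single_apply, smul_eq_mul]
  split_ifs <;> grind

lemma permHom_injective (hn : 5 ≤ n) : Function.Injective (permHom n hev) := by
  refine (injective_iff_map_eq_one _).2 fun σ hσ => ?_
  by_contra hσ1
  obtain ⟨b, hb⟩ : ∃ b, σ b ≠ b := by simpa [Equiv.ext_iff] using hσ1
  obtain ⟨c, hc⟩ :=
    Fin.exists_notMem_of_card_lt (s := {σ b, b}) (Finset.card_le_two.trans_lt (by omega))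
  obtain ⟨d, hd⟩ :=
    Fin.exists_notMem_of_card_lt (s := {b, c, σ b, σ c}) (Finset.card_le_four.trans_lt (by omega))
  simp only [Finset.mem_insert, Finset.mem_singleton, not_or] at hc hd
  set x : Wprime4 n := ⟨_, eMem4 n b c⟩
  have hfix : permHom n hev σ (Submodule.Quotient.mk x) = Submodule.Quotient.mk x := by
    rw [hσ]; rfl
  rw [permHom_mk, Submodule.Quotient.eq, mem_span_uElt4_iff] at hfix
  have h := hfix (σ b) d
  simp [x, permW_apply, hb, hc.1, hc.2, hd.1, hd.2.1, hd.2.2.1, hd.2.2.2,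
    Equiv.symm_apply_eq] at h

end Quotient

end UnitaryQuotient

open UnitaryQuotient

/-- For even `n ≥ 6`, with `W = F₄ⁿ`, `B x y = ∑ i, x i * (y i)²`,
`u = (1,…,1)`, `W' = {x : B x u = 0} = {x : ∑ i, x i = 0}` and `V = W' / span{u}` of
dimension `n - 2`: the form `B` induces a well-defined nondegenerate Hermitian form `β` on
`V`; the coordinate-permutation action of `S_n` induces an injective homomorphism
`ψ : S_n → GL(V)` preserving `β`; each class `[e i + e j]` (for `i ≠ j`) is a nonzero
singular vector; and each transposition `(i j)` maps to the unitary transvection of `V` in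
`[e i + e j]`. Hence `S_n` embeds into `U_{n-2}(2)` with all transpositions going to
unitary transvections. -/
theorem symmetric_group_into_unitary_quotient (n : ℕ) (hn : 6 ≤ n) (hev : Even n) :
    -- `W'` is exactly `{x : B x u = 0}` (and it contains `u`)
    (∀ x : Fin n → F4, x ∈ Wprime4 n ↔ B19 n x (fun _ => 1) = 0) ∧
    -- `V` has dimension `n - 2` over `F₄`
    Module.finrank F4 (V19 n hev) = n - 2 ∧
    -- (a) `B` induces a well-defined nondegenerate Hermitian form `β` on `V`
    (∃ β : V19 n hev → V19 n hev → F4,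
      (∀ x y : Wprime4 n,
        β (Submodule.Quotient.mk x) (Submodule.Quotient.mk y) = B19 n x.1 y.1) ∧
      (∀ x x' y : V19 n hev, β (x + x') y = β x y + β x' y) ∧
      (∀ x y y' : V19 n hev, β x (y + y') = β x y + β x y') ∧
      (∀ (c : F4) (x y : V19 n hev), β (c • x) y = c * β x y) ∧
      (∀ (c : F4) (x y : V19 n hev), β x (c • y) = c ^ 2 * β x y) ∧
      (∀ x y : V19 n hev, β y x = (β x y) ^ 2) ∧
      (∀ v : V19 n hev, (∀ w : V19 n hev, β v w = 0) → v = 0) ∧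
      -- (b) the coordinate-permutation action of `S_n` on `W` induces `ψ : S_n → GL(V)`
      (∃ ψ : Equiv.Perm (Fin n) →* (V19 n hev ≃ₗ[F4] V19 n hev),
        (∀ (σ : Equiv.Perm (Fin n)) (x x' : Wprime4 n),
          (∀ i, x'.1 i = x.1 (σ⁻¹ i)) →
            (ψ σ) (Submodule.Quotient.mk x) = Submodule.Quotient.mk x') ∧
        -- (c) `ψ` is injective and preserves `β`
        Function.Injective ψ ∧
        (∀ (σ : Equiv.Perm (Fin n)) (v w : V19 n hev), β ((ψ σ) v) ((ψ σ) w) = β v w) ∧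
        -- each `[e i + e j]` is a nonzero singular vector, and each transposition `(i j)`
        -- acts as the unitary transvection in `[e i + e j]`
        (∀ i j : Fin n, i ≠ j →
          (Submodule.Quotient.mk (⟨Pi.single i 1 + Pi.single j 1, eMem4 n i j⟩ : Wprime4 n)
              ≠ (0 : V19 n hev)) ∧
          β (Submodule.Quotient.mk (⟨Pi.single i 1 + Pi.single j 1, eMem4 n i j⟩ : Wprime4 n))
            (Submodule.Quotient.mk (⟨Pi.single i 1 + Pi.single j 1, eMem4 n i j⟩ : Wprime4 n))
            = 0 ∧
          (∀ x x' : Wprime4 n,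
            x'.1 = x.1 + B19 n x.1 (Pi.single i 1 + Pi.single j 1) •
                (Pi.single i 1 + Pi.single j 1) →
              (ψ (Equiv.swap i j)) (Submodule.Quotient.mk x) = Submodule.Quotient.mk x')))) := by
  refine ⟨fun x => by rw [mem_Wprime4_iff, B19_one_right], finrank_V19 (by omega),
    beta n hev, beta_mk, beta_add_left, beta_add_right, beta_smul_left, beta_smul_right,
    beta_swap, beta_nondegenerate, permHom n hev, fun σ _ _ => permHom_mk_of_apply_eq σ,
    permHom_injective (by omega), beta_permHom, fun i j hij =>
      ⟨mk_single_add_single_ne_zero (by omega) hij, beta_self_single_add_single hij,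
        fun _ _ => permHom_swap_mk i j⟩⟩
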